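/- Let B(t) and P(t) be square-matrix-valued differentiable functions, and define flows on an invertible matrix W by ∂_x W = B_u W and ∂_α W = P_l W, where B = L^n for L = WΛW⁻¹ and P = q ⊗ r with ∂_x q = B_u q and ∂_x r = -B_uᵀ r. Then, using [A_u, B_u]_l = 0, [A_l, B_l]_u = 0, and the outer product rules M(q⊗r) = (Mq)⊗r, (q⊗r)M = q⊗(Mᵀr), the flows commute on W: ∂_α(B_u W) - ∂_x((q⊗r)_l W) = 0, given that ∂_α B = [(q⊗r)_l, B]. -/

import Mathlib

open Matrix

/-- The upper (including diagonal) triangular part of a matrix. -/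
def upperPart {ι R : Type*} [LinearOrder ι] [CommRing R] (A : Matrix ι ι R) :
    Matrix ι ι R :=
  Matrix.of fun i j => if i ≤ j then A i j else 0

/-- The strictly lower triangular part of a matrix. -/
def lowerPart {ι R : Type*} [LinearOrder ι] [CommRing R] (A : Matrix ι ι R) :
    Matrix ι ι R :=
  Matrix.of fun i j => if j < i then A i j else 0

/-- Entrywise application of a derivation to a matrix. -/
def matDeriv {ι R : Type*} [CommRing R] [Algebra ℝ R]
    (δ : Derivation ℝ R R) (A : Matrix ι ι R) : Matrix ι ι R :=
  A.map δ

/-!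
Write `P = q ⊗ r`. By the Leibniz rule the two sides are `((∂_α B)_u + B_u P_l) W` and
`((∂_x P)_l + P_l B_u) W`, and the hypotheses on `q` and `r` give `∂_x P = [B_u, P]`.
Since products of strictly lower triangular matrices are strictly lower and products of upper
triangular matrices are upper, `[P_l, B]_u = [P_l, B_u]_u` and `[B_u, P]_l = [B_u, P_l]_l`;
adding the two parts of `[P_l, B_u]` back together makes the difference vanish.
-/

section TriangularParts

variable {ι R : Type*} [LinearOrder ι] [CommRing R]

lemma upperPart_add (A B : Matrix ι ι R) : upperPart (A + B) = upperPart A + upperPart B := by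
  ext i j
  simp only [upperPart, of_apply, Matrix.add_apply]
  split_ifs <;> simp

lemma upperPart_sub (A B : Matrix ι ι R) : upperPart (A - B) = upperPart A - upperPart B := by
  ext i j
  simp only [upperPart, of_apply, Matrix.sub_apply]
  split_ifs <;> simp

lemma lowerPart_add (A B : Matrix ι ι R) : lowerPart (A + B) = lowerPart A + lowerPart B := by
  ext i j
  simp only [lowerPart, of_apply, Matrix.add_apply]
  split_ifs <;> simp

lemma lowerPart_sub (A B : Matrix ι ι R) : lowerPart (A - B) = lowerPart A - lowerPart B := by
  ext i j
  simp only [lowerPart, of_apply, Matrix.sub_apply]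
  split_ifs <;> simp

lemma upperPart_add_lowerPart (A : Matrix ι ι R) : upperPart A + lowerPart A = A := by
  ext i j
  rcases le_or_gt i j with h | h
  · simp [upperPart, lowerPart, h, not_lt.2 h]
  · simp [upperPart, lowerPart, h, not_le.2 h]

variable [Fintype ι]

lemma upperPart_lowerPart_mul_lowerPart (A B : Matrix ι ι R) :
    upperPart (lowerPart A * lowerPart B) = 0 := by
  ext i j
  simp only [upperPart, lowerPart, of_apply, mul_apply, Matrix.zero_apply]
  split_ifs with hij
  · refine Finset.sum_eq_zero fun k _ => ?_
    split_ifs with hki hjk <;> first | simp | exact absurd (hjk.trans hki) hij.not_gt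
  · rfl

lemma lowerPart_upperPart_mul_upperPart (A B : Matrix ι ι R) :
    lowerPart (upperPart A * upperPart B) = 0 := by
  ext i j
  simp only [upperPart, lowerPart, of_apply, mul_apply, Matrix.zero_apply]
  split_ifs with hji
  · refine Finset.sum_eq_zero fun k _ => ?_
    split_ifs with hik hkj <;> first | simp | exact absurd (hik.trans hkj) hji.not_ge
  · rfl

lemma upperPart_lowerPart_mul (A B : Matrix ι ι R) :
    upperPart (lowerPart A * B) = upperPart (lowerPart A * upperPart B) := by
  conv_lhs => rw [← upperPart_add_lowerPart B]
  rw [mul_add, upperPart_add, upperPart_lowerPart_mul_lowerPart, add_zero]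

lemma upperPart_mul_lowerPart (A B : Matrix ι ι R) :
    upperPart (A * lowerPart B) = upperPart (upperPart A * lowerPart B) := by
  conv_lhs => rw [← upperPart_add_lowerPart A]
  rw [add_mul, upperPart_add, upperPart_lowerPart_mul_lowerPart, add_zero]

lemma lowerPart_upperPart_mul (A B : Matrix ι ι R) :
    lowerPart (upperPart A * B) = lowerPart (upperPart A * lowerPart B) := by
  conv_lhs => rw [← upperPart_add_lowerPart B]
  rw [mul_add, lowerPart_add, lowerPart_upperPart_mul_upperPart, zero_add]

lemma lowerPart_mul_upperPart (A B : Matrix ι ι R) :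
    lowerPart (A * upperPart B) = lowerPart (lowerPart A * upperPart B) := by
  conv_lhs => rw [← upperPart_add_lowerPart A]
  rw [add_mul, lowerPart_add, lowerPart_upperPart_mul_upperPart, zero_add]

lemma upperPart_commutator_sub_lowerPart_commutator (B P : Matrix ι ι R) :
    upperPart (lowerPart P * B - B * lowerPart P)
        - lowerPart (upperPart B * P - P * upperPart B)
      = lowerPart P * upperPart B - upperPart B * lowerPart P := by
  rw [upperPart_sub, lowerPart_sub, upperPart_lowerPart_mul, upperPart_mul_lowerPart,
    lowerPart_upperPart_mul, lowerPart_mul_upperPart]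
  conv_rhs => rw [← upperPart_add_lowerPart (lowerPart P * upperPart B),
    ← upperPart_add_lowerPart (upperPart B * lowerPart P)]
  abel

end TriangularParts

section MatDeriv

variable {ι R : Type*} [CommRing R] [Algebra ℝ R] (δ : Derivation ℝ R R)

lemma matDeriv_mul [Fintype ι] (A B : Matrix ι ι R) :
    matDeriv δ (A * B) = matDeriv δ A * B + A * matDeriv δ B := by
  ext i j
  simp only [matDeriv, map_apply, Matrix.add_apply, mul_apply, map_sum, Derivation.leibniz,
    smul_eq_mul, ← Finset.sum_add_distrib]
  exact Finset.sum_congr rfl fun k _ => by ring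

lemma matDeriv_vecMulVec (q r : ι → R) :
    matDeriv δ (vecMulVec q r)
      = vecMulVec (fun i => δ (q i)) r + vecMulVec q (fun i => δ (r i)) := by
  ext i j
  simp only [matDeriv, map_apply, Matrix.add_apply, vecMulVec_apply, Derivation.leibniz,
    smul_eq_mul]
  ring

variable [LinearOrder ι]

lemma matDeriv_upperPart (A : Matrix ι ι R) :
    matDeriv δ (upperPart A) = upperPart (matDeriv δ A) := by
  ext i j
  simp only [matDeriv, upperPart, map_apply, of_apply, apply_ite δ, map_zero]

lemma matDeriv_lowerPart (A : Matrix ι ι R) :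
    matDeriv δ (lowerPart A) = lowerPart (matDeriv δ A) := by
  ext i j
  simp only [matDeriv, lowerPart, map_apply, of_apply, apply_ite δ, map_zero]

end MatDeriv

/-- The squared eigenfunction flow commutes with the hierarchy flow:
given `∂_α B = [(q⊗r)_l, B]`, `∂_x q = B_u q`, `∂_x r = -B_uᵀ r`,
`∂_x W = B_u W` and `∂_α W = (q⊗r)_l W`, one has
`∂_α(B_u W) - ∂_x((q⊗r)_l W) = 0`, i.e. `[∂_α, ∂_x] W = 0`. -/
theorem squared_eigenfunction_symmetry_commutes {ι R : Type*} [Fintype ι] [LinearOrder ι]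
    [CommRing R] [Algebra ℝ R] (δx δα : Derivation ℝ R R)
    (B W : Matrix ι ι R) (q r : ι → R)
    (hB : matDeriv δα B = lowerPart (vecMulVec q r) * B - B * lowerPart (vecMulVec q r))
    (hq : (fun i => δx (q i)) = (upperPart B).mulVec q)
    (hr : (fun i => δx (r i)) = -((upperPart B).transpose.mulVec r))
    (hWx : matDeriv δx W = upperPart B * W)
    (hWα : matDeriv δα W = lowerPart (vecMulVec q r) * W) :
    matDeriv δα (upperPart B * W) - matDeriv δx (lowerPart (vecMulVec q r) * W) = 0 := by
  set P := vecMulVec q r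
  have hP : matDeriv δx P = upperPart B * P - P * upperPart B := by
    rw [matDeriv_vecMulVec, hq, hr, vecMulVec_neg, mulVec_transpose, ← mul_vecMulVec,
      ← vecMulVec_mul, sub_eq_add_neg]
  have hcomm := upperPart_commutator_sub_lowerPart_commutator B P
  rw [sub_eq_iff_eq_add] at hcomm
  rw [matDeriv_mul, matDeriv_mul, hWx, hWα, matDeriv_upperPart, matDeriv_lowerPart, hB, hP, hcomm]
  noncomm_ring
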